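/- Let f be a transcendental meromorphic function having a finite asymptotic value. Then f has no Baker wandering domain. In particular, a transcendental meromorphic function with an omitted value has no Baker wandering domain. -/

import Mathlib

open OnePoint Topology Filter Set

noncomputable section

/-- The Riemann sphere, modeled as the one-point compactification of `ℂ`. -/
abbrev Sph : Type := OnePoint ℂ

noncomputable instance : UniformSpace Sph := uniformSpaceOfCompactR1

/-- Extend `f : ℂ → Sph` to the sphere by the convention `f ∞ = ∞`
(used only to define iteration; `∞` and its preimages lie in the Julia set anyway). -/
def lift (f : ℂ → Sph) : Sph → Sph := fun w => Option.elim w ∞ f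

/-- The Fatou set: points having a neighborhood on which the family of iterates
is (uniformly) equicontinuous, i.e. normal. -/
def FatouSet (f : ℂ → Sph) : Set Sph :=
  {w | ∃ U : Set Sph, IsOpen U ∧ w ∈ U ∧ EquicontinuousOn (fun n : ℕ => (lift f)^[n]) U}

def JuliaSet (f : ℂ → Sph) : Set Sph := (FatouSet f)ᶜ

/-- `U` is a Fatou component: a connected component of the Fatou set. -/
def FatouComp (f : ℂ → Sph) (U : Set Sph) : Prop :=
  ∃ w ∈ FatouSet f, U = connectedComponentIn (FatouSet f) w

/-- `V = Uₙ`: `V` is the Fatou component containing `fⁿ(U)`. -/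
def IterComp (f : ℂ → Sph) (U : Set Sph) (n : ℕ) (V : Set Sph) : Prop :=
  FatouComp f V ∧ (lift f)^[n] '' U ⊆ V

/-- `a ∈ ℂ` is an omitted value of `f`. -/
def OmittedC (f : ℂ → Sph) (a : ℂ) : Prop := ∀ z : ℂ, f z ≠ (a : Sph)

/-- `f : ℂ → Sph` is meromorphic on `ℂ`: continuous (into the sphere), locally given by an
analytic function where finite, and with isolated points of infinitude (poles). -/
def MeroC (f : ℂ → Sph) : Prop :=
  Continuous f ∧
  (∀ z : ℂ, f z ≠ ∞ → ∃ g : ℂ → ℂ, AnalyticAt ℂ g z ∧ ∀ᶠ w in nhds z, f w = (g w : Sph)) ∧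
  (∀ z : ℂ, f z = ∞ → ∀ᶠ w in nhdsWithin z {z}ᶜ, f w ≠ ∞)

def IsRationalC (f : ℂ → Sph) : Prop :=
  ∃ p q : Polynomial ℂ, q ≠ 0 ∧ ∀ z : ℂ, q.eval z ≠ 0 → f z = ((p.eval z / q.eval z : ℂ) : Sph)

/-- Transcendental meromorphic function on `ℂ`. -/
def TranscMero (f : ℂ → Sph) : Prop := MeroC f ∧ ¬ IsRationalC f

/-- The class `M`: at least two poles, or one pole which is not an omitted value. -/
def InM (f : ℂ → Sph) : Prop :=
  (∃ p q : ℂ, p ≠ q ∧ f p = ∞ ∧ f q = ∞) ∨ (∃ p : ℂ, f p = ∞ ∧ ∃ z : ℂ, f z = (p : Sph))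

/-- The connected components of the complement of `S` in the sphere. -/
def complComps (S : Set Sph) : Set (Set Sph) := {C | ∃ x ∈ Sᶜ, C = connectedComponentIn Sᶜ x}

/-- Simple connectivity (connectivity 1): the complement has at most one component. -/
def SimplyConnSet (S : Set Sph) : Prop := (complComps S).Subsingleton

def MultConnSet (S : Set Sph) : Prop := ¬ SimplyConnSet S

/-- Connectivity exactly 2. -/
def DoublyConnSet (S : Set Sph) : Prop := ∃ C D, C ≠ D ∧ complComps S = {C, D}

/-- Complete invariance: `f⁻¹(U) = U`. -/
def CompInv (f : ℂ → Sph) (U : Set Sph) : Prop := ∀ z : Sph, lift f z ∈ U ↔ z ∈ U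

/-- A closed curve in `ℂ` (as a set: the image of a loop). -/
def IsClosedCurve (Γ : Set ℂ) : Prop :=
  ∃ γ : ℝ → ℂ, ContinuousOn γ (Set.Icc 0 1) ∧ γ 0 = γ 1 ∧ Γ = γ '' Set.Icc 0 1

/-- A Jordan curve in `ℂ`. -/
def IsJordanCurve (Γ : Set ℂ) : Prop :=
  ∃ γ : ℝ → ℂ, ContinuousOn γ (Set.Icc 0 1) ∧ γ 0 = γ 1 ∧ Set.InjOn γ (Set.Ico 0 1) ∧
    Γ = γ '' Set.Icc 0 1

/-- `B(K)`: the union of the bounded components of the complement of `K` in `ℂ`. -/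
def Bset (K : Set ℂ) : Set ℂ :=
  {z | z ∉ K ∧ Bornology.IsBounded (connectedComponentIn Kᶜ z)}

/-- The round open annulus `r < |z| < R`. -/
def Ann (r R : ℝ) : Set ℂ := {z | r < ‖z‖ ∧ ‖z‖ < R}

/-- `H` is a Herman ring of (least) period `p`: a doubly connected `p`-periodic Fatou component
on which `f^p` is topologically conjugate to an irrational rotation of an annulus. -/
def IsHermanRing (f : ℂ → Sph) (H : Set Sph) (p : ℕ) : Prop :=
  FatouComp f H ∧ 0 < p ∧ (∀ z ∈ H, (lift f)^[p] z ∈ H) ∧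
  (∀ q : ℕ, 0 < q → q < p → ¬ (∀ z ∈ H, (lift f)^[q] z ∈ H)) ∧
  DoublyConnSet H ∧
  ∃ r R θ : ℝ, 0 ≤ r ∧ r < R ∧ Irrational θ ∧
    ∃ (φ : Sph → ℂ) (ψ : ℂ → Sph),
      ContinuousOn φ H ∧ Set.BijOn φ H (Ann r R) ∧
      ContinuousOn ψ (Ann r R) ∧ (∀ z ∈ H, ψ (φ z) = z) ∧
      ∀ z ∈ H, φ ((lift f)^[p] z) = Complex.exp (2 * Real.pi * θ * Complex.I) * φ z

/-- Wandering domain: a Fatou component whose forward components are pairwise distinct. -/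
def Wandering (f : ℂ → Sph) (U : Set Sph) : Prop :=
  FatouComp f U ∧
    ∀ (m n : ℕ) (V W : Set Sph), m ≠ n → IterComp f U m V → IterComp f U n W → V ≠ W

/-- Baker wandering domain: for all large `n`, `Uₙ` is bounded, multiply connected and
surrounds `0`, and `Uₙ → ∞`. -/
def BakerWandering (f : ℂ → Sph) (U : Set Sph) : Prop :=
  Wandering f U ∧
  (∃ N : ℕ, ∀ n, N ≤ n → ∀ V, IterComp f U n V →
      ∞ ∉ V ∧ Bornology.IsBounded {z : ℂ | (z : Sph) ∈ V} ∧ MultConnSet V ∧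
      ((0 : ℂ) : Sph) ∉ V ∧ ∞ ∉ connectedComponentIn Vᶜ ((0 : ℂ) : Sph)) ∧
  ∀ R : ℝ, ∃ N : ℕ, ∀ n, N ≤ n → ∀ V, IterComp f U n V →
    ∀ z : ℂ, (z : Sph) ∈ V → R ≤ ‖z‖

/-- A finite asymptotic value: `f(γ(t)) → w` along some path `γ(t) → ∞`. -/
def HasFiniteAsymptoticValue (f : ℂ → Sph) : Prop :=
  ∃ (w : ℂ) (γ : ℝ → ℂ), ContinuousOn γ (Set.Ici 0) ∧
    Filter.Tendsto γ Filter.atTop (Bornology.cobounded ℂ) ∧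
    Filter.Tendsto (fun t => f (γ t)) Filter.atTop (nhds (w : Sph))

/-- A Möbius transformation of the sphere. -/
def IsMobius (S : Sph → Sph) : Prop :=
  ∃ a b c d : ℂ, a * d - b * c ≠ 0 ∧
    (∀ z : ℂ, (c * z + d ≠ 0 → S (z : Sph) = (((a * z + b) / (c * z + d) : ℂ) : Sph)) ∧
              (c * z + d = 0 → S (z : Sph) = ∞)) ∧
    (c = 0 → S ∞ = ∞) ∧ (c ≠ 0 → S ∞ = ((a / c : ℂ) : Sph))

/-- `f` has a critical point (hence a critical value). -/
def HasCriticalValue (f : ℂ → Sph) : Prop :=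
  ∃ (c : ℂ) (g : ℂ → ℂ), AnalyticAt ℂ g c ∧ (∀ᶠ w in nhds c, f w = (g w : Sph)) ∧
    deriv g c = 0

/-!
If `f` stays bounded on an unbounded connected set `S`, then `f` does not tend to `∞` at `∞`, so
`∞` lies in the Julia set and, by the open mapping theorem, the Fatou set is forward invariant.
For large `n` the Baker domain `Uₙ` surrounds `0` and escapes to `∞`, while `f(Uₙ) ⊆ Uₙ₊₁`; hence
`S` misses `Uₙ`, and `S ∪ {∞}` together with a disc around `0` joins `0` to `∞` in the complement
of `Uₙ`, which is impossible. Such an `S` is a tail of the asymptotic path or, for an omitted value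
`a`, a component of `{|1/(f - a)| > ε}`, unbounded by the maximum modulus principle.
-/

open Bornology

theorem Bornology.frequently_cobounded_mem {α : Type*} [Bornology α] {s : Set α}
    (hs : ¬ IsBounded s) : ∃ᶠ x in cobounded α, x ∈ s :=
  fun h => hs (isBounded_def.2 h)

theorem tendsto_coe_cobounded : Tendsto ((↑) : ℂ → Sph) (cobounded ℂ) (𝓝 ∞) := by
  rw [Metric.cobounded_eq_cocompact, ← coclosedCompact_eq_cocompact]
  exact tendsto_coe_infty

theorem infty_mem_closure_coe_image {S : Set ℂ} (hS : ¬ IsBounded S) :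
    ∞ ∈ closure ((↑) '' S : Set Sph) :=
  mem_closure_iff_frequently.2 <| tendsto_coe_cobounded.frequently <|
    (frequently_cobounded_mem hS).mono fun _ hz => mem_image_of_mem _ hz

theorem IsPreconnected.insert_infty_coe_image {S : Set ℂ} (hS : IsPreconnected S)
    (hSb : ¬ IsBounded S) : IsPreconnected (insert ∞ ((↑) '' S : Set Sph)) :=
  (hS.image _ continuous_coe.continuousOn).subset_closure (subset_insert _ _)
    (insert_subset (infty_mem_closure_coe_image hSb) subset_closure)

def sphInvSub (a : ℂ) (s : Sph) : ℂ := s.elim 0 fun c => (c - a)⁻¹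

@[simp] theorem sphInvSub_coe (a c : ℂ) : sphInvSub a c = (c - a)⁻¹ := rfl

@[simp] theorem sphInvSub_infty (a : ℂ) : sphInvSub a ∞ = 0 := rfl

theorem tendsto_sphInvSub_infty (a : ℂ) : Tendsto (sphInvSub a) (𝓝 ∞) (𝓝 0) := by
  refine tendsto_nhds_infty'.2 ⟨tendsto_pure_nhds _ _, ?_⟩
  rw [coclosedCompact_eq_cocompact, ← Metric.cobounded_eq_cocompact]
  exact tendsto_inv₀_cobounded.comp (tendsto_sub_const_cobounded a)

def sphInv (c : ℂ) : Sph := if c = 0 then ∞ else ↑c⁻¹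

theorem sphInv_sphInvSub_zero {s : Sph} (hs : s ≠ ↑(0 : ℂ)) : sphInv (sphInvSub 0 s) = s := by
  induction s using OnePoint.rec with
  | infty => simp [sphInv]
  | coe c =>
    have hc : c ≠ 0 := fun h => hs (h ▸ rfl)
    simp [sphInv, hc]

theorem nhds_infty_le_map_sphInv : 𝓝 ∞ ≤ map sphInv (𝓝 0) := by
  refine le_map_of_right_inverse ?_ (tendsto_sphInvSub_infty 0)
  filter_upwards [isOpen_compl_singleton.mem_nhds (infty_ne_coe (0 : ℂ))] with s hs
  exact sphInv_sphInvSub_zero hs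

section Meromorphic

variable {f : ℂ → Sph}

theorem MeroC.analyticAt_sphInvSub_comp (hm : MeroC f) {a z : ℂ} (hz : f z ≠ ∞)
    (hza : f z ≠ a) : AnalyticAt ℂ (sphInvSub a ∘ f) z := by
  obtain ⟨g, hg, hfg⟩ := hm.2.1 z hz
  have hgz : g z - a ≠ 0 := sub_ne_zero.2 fun h => hza (by rw [hfg.self_of_nhds, h])
  refine ((hg.sub analyticAt_const).inv hgz).congr ?_
  filter_upwards [hfg] with w hw
  simp [hw]

theorem MeroC.analyticAt_sphInvSub_comp_of_pole (hm : MeroC f) {a z : ℂ} (hz : f z = ∞)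
    (hza : ∀ᶠ w in 𝓝[≠] z, f w ≠ a) : AnalyticAt ℂ (sphInvSub a ∘ f) z := by
  refine Complex.analyticAt_of_differentiable_on_punctured_nhds_of_continuousAt ?_ ?_
  · filter_upwards [hm.2.2 z hz, hza] with w hw hwa
    exact (hm.analyticAt_sphInvSub_comp hw hwa).differentiableAt
  · have hf : Tendsto f (𝓝 z) (𝓝 ∞) := hz ▸ hm.1.tendsto z
    simpa [ContinuousAt, hz] using (tendsto_sphInvSub_infty a).comp hf

theorem MeroC.differentiable_sphInvSub_comp (hm : MeroC f) {a : ℂ} (ha : OmittedC f a) :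
    Differentiable ℂ (sphInvSub a ∘ f) := fun z => by
  by_cases hz : f z = ∞
  · exact (hm.analyticAt_sphInvSub_comp_of_pole hz (.of_forall ha)).differentiableAt
  · exact (hm.analyticAt_sphInvSub_comp hz (ha z)).differentiableAt

theorem MeroC.exists_ne_infty (hm : MeroC f) : ∃ z, f z ≠ ∞ := by
  by_contra! h
  obtain ⟨w, hw⟩ := (hm.2.2 0 (h 0)).exists
  exact hw (h w)

/-- Identity theorem: `{x | f = c near x}` is clopen. -/
theorem MeroC.not_eventually_eq_coe (hm : MeroC f) (htr : ¬ IsRationalC f) (z c : ℂ) :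
    ¬ ∀ᶠ w in 𝓝 z, f w = c := by
  intro hz
  set A := {x | ∀ᶠ w in 𝓝 x, f w = c}
  have hA_open : IsOpen A := isOpen_iff_mem_nhds.2 fun x hx => hx.eventually_nhds
  have hA_closed : IsClosed A := by
    refine isClosed_iff_frequently.2 fun x hxA => ?_
    by_cases hx : x ∈ A
    · exact hx
    have hfx : f x = c := (isClosed_eq hm.1 continuous_const).mem_of_frequently_of_tendsto
      (hxA.mono fun y hy => hy.self_of_nhds) tendsto_id
    obtain ⟨g, hg, hfg⟩ := hm.2.1 x (hfx ▸ coe_ne_infty c)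
    have hgc : ∃ᶠ y in 𝓝[≠] x, g y = c := by
      have hA' : ∃ᶠ y in 𝓝[≠] x, y ∈ A :=
        frequently_nhdsWithin_iff.2 (hxA.mono fun y hy => ⟨hy, fun h => hx (h ▸ hy)⟩)
      refine (hA'.and_eventually (nhdsWithin_le_nhds hfg)).mono fun y ⟨hyA, hfy⟩ => ?_
      exact coe_injective (hfy.symm.trans hyA.self_of_nhds)
    filter_upwards [hfg, (hg.frequently_eq_iff_eventually_eq analyticAt_const).1 hgc]
      with w h1 h2
    rw [h1, h2]
  have hA : A = univ := IsClopen.eq_univ ⟨hA_closed, hA_open⟩ ⟨z, hz⟩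
  refine htr ⟨Polynomial.C c, 1, one_ne_zero, fun w _ => ?_⟩
  simpa using (hA ▸ mem_univ w : w ∈ A).self_of_nhds

theorem nhds_le_map_of_eventuallyEq_comp {X : Type*} [TopologicalSpace X] {f φ : ℂ → X}
    {g : ℂ → ℂ} {x : ℂ} (hg : AnalyticAt ℂ g x) (hgc : ¬ ∀ᶠ w in 𝓝 x, g w = g x)
    (hφ : 𝓝 (φ (g x)) ≤ map φ (𝓝 (g x))) (hf : f =ᶠ[𝓝 x] φ ∘ g) :
    𝓝 (f x) ≤ map f (𝓝 x) :=
  calc 𝓝 (f x) = 𝓝 (φ (g x)) := by rw [hf.self_of_nhds]; rfl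
    _ ≤ map φ (𝓝 (g x)) := hφ
    _ ≤ map φ (map g (𝓝 x)) :=
      map_mono (hg.eventually_constant_or_nhds_le_map_nhds.resolve_left hgc)
    _ = map f (𝓝 x) := by rw [map_map, map_congr hf]

/-- Open mapping theorem; at a pole, apply it to `1 / f`. -/
theorem MeroC.nhds_le_map (hm : MeroC f) (htr : ¬ IsRationalC f) (x : ℂ) :
    𝓝 (f x) ≤ map f (𝓝 x) := by
  by_cases hx : f x = ∞
  · have hne0 : ∀ᶠ w in 𝓝 x, f w ≠ ↑(0 : ℂ) :=
      (hx ▸ hm.1.tendsto x) (isOpen_compl_singleton.mem_nhds (infty_ne_coe 0))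
    have hk0 : (sphInvSub 0 ∘ f) x = 0 := by simp [hx]
    refine nhds_le_map_of_eventuallyEq_comp (φ := sphInv)
      (hm.analyticAt_sphInvSub_comp_of_pole hx (nhdsWithin_le_nhds hne0)) (fun hc => ?_)
      (by rw [hk0, show sphInv 0 = ∞ from if_pos rfl]; exact nhds_infty_le_map_sphInv) ?_
    · obtain ⟨w, ⟨hw0, hw⟩, hwp⟩ :=
        (((hc.and hne0).filter_mono nhdsWithin_le_nhds).and (hm.2.2 x hx)).exists
      obtain ⟨c, hc⟩ := ne_infty_iff_exists.1 hwp
      simp only [Function.comp_apply, ← hc, hx, sphInvSub_coe, sphInvSub_infty, sub_zero,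
        inv_eq_zero] at hw0
      exact hw (by rw [← hc, hw0])
    · filter_upwards [hne0] with w hw using (sphInv_sphInvSub_zero hw).symm
  · obtain ⟨g, hg, hfg⟩ := hm.2.1 x hx
    refine nhds_le_map_of_eventuallyEq_comp (φ := ((↑) : ℂ → Sph)) hg (fun hc => ?_)
      (nhds_coe_eq _).le hfg
    refine hm.not_eventually_eq_coe htr x (g x) ?_
    filter_upwards [hfg, hc] with w h1 h2
    rw [h1, h2]

end Meromorphic

theorem EquicontinuousAt.iterate_apply {X : Type*} [UniformSpace X]
    {F : X → X} {x : X} (h : EquicontinuousAt (fun n => F^[n]) x)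
    (hF : 𝓝 (F x) ≤ map F (𝓝 x)) : EquicontinuousAt (fun n => F^[n]) (F x) := fun u hu =>
  hF <| (h u hu).mono fun y hy n => by simpa only [← Function.iterate_succ_apply] using hy (n + 1)

section Fatou

variable {f : ℂ → Sph}

theorem infty_notMem_fatouSet (hf : ¬ Tendsto f (cobounded ℂ) (𝓝 ∞)) : ∞ ∉ FatouSet f := by
  rintro ⟨O, hO, hOinf, hequi⟩
  have hcont : ContinuousWithinAt (lift f) O ∞ := by
    simpa using (hequi ∞ hOinf).continuousWithinAt 1
  exact hf ((hcont.continuousAt (hO.mem_nhds hOinf)).tendsto.comp tendsto_coe_cobounded)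

theorem MeroC.nhds_le_map_lift (hm : MeroC f) (htr : ¬ IsRationalC f) (x : ℂ) :
    𝓝 (lift f x) ≤ map (lift f) (𝓝 (x : Sph)) := by
  rw [nhds_coe_eq, map_map]
  exact hm.nhds_le_map htr x

theorem MeroC.apply_mem_fatouSet (hm : MeroC f) (htr : ¬ IsRationalC f) {x : ℂ}
    (hx : (x : Sph) ∈ FatouSet f) : f x ∈ FatouSet f := by
  obtain ⟨O, hO, hxO, hequi⟩ := hx
  have hat (z : ℂ) (hz : (z : Sph) ∈ O) :
      EquicontinuousAt (fun n => (lift f)^[n]) (f z) := by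
    refine EquicontinuousAt.iterate_apply (fun u hu => ?_) (hm.nhds_le_map_lift htr z)
    simpa only [nhdsWithin_eq_nhds.2 (hO.mem_nhds hz)] using hequi _ hz u hu
  refine ⟨interior (f '' ((↑) ⁻¹' O)), isOpen_interior, mem_interior_iff_mem_nhds.2 <|
    hm.nhds_le_map htr x (image_mem_map ((hO.preimage continuous_coe).mem_nhds hxO)), ?_⟩
  rintro _ hy
  obtain ⟨z, hz, rfl⟩ := interior_subset hy
  exact (hat z hz).equicontinuousWithinAt _

theorem MeroC.lift_mem_fatouSet (hm : MeroC f) (htr : ¬ IsRationalC f)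
    (hinf : ∞ ∉ FatouSet f) {s : Sph} (hs : s ∈ FatouSet f) : lift f s ∈ FatouSet f := by
  induction s using OnePoint.rec with
  | infty => exact absurd hs hinf
  | coe x => exact hm.apply_mem_fatouSet htr hs

theorem continuousOn_lift_fatouSet (hf : Continuous f) (hinf : ∞ ∉ FatouSet f) :
    ContinuousOn (lift f) (FatouSet f) := fun s hs => by
  induction s using OnePoint.rec with
  | infty => exact absurd hs hinf
  | coe x => exact (continuousAt_coe (f := lift f).2 hf.continuousAt).continuousWithinAt

theorem MeroC.mapsTo_lift_connectedComponentIn (hm : MeroC f) (htr : ¬ IsRationalC f)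
    (hinf : ∞ ∉ FatouSet f) {w : Sph} (hw : w ∈ FatouSet f) :
    MapsTo (lift f) (connectedComponentIn (FatouSet f) w)
      (connectedComponentIn (FatouSet f) (lift f w)) := by
  have hsub := connectedComponentIn_subset (FatouSet f) w
  refine mapsTo_iff_image_subset.2 <| (isPreconnected_connectedComponentIn.image _
    ((continuousOn_lift_fatouSet hm.1 hinf).mono hsub)).subset_connectedComponentIn
    (mem_image_of_mem _ (mem_connectedComponentIn hw)) ?_
  rintro _ ⟨s, hs, rfl⟩
  exact hm.lift_mem_fatouSet htr hinf (hsub hs)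

theorem MeroC.exists_iterComp (hm : MeroC f) (htr : ¬ IsRationalC f) (hinf : ∞ ∉ FatouSet f)
    {U : Set Sph} (hU : FatouComp f U) :
    ∃ V : ℕ → Set Sph, (∀ n, IterComp f U n (V n)) ∧ ∀ n, MapsTo (lift f) (V n) (V (n + 1)) := by
  obtain ⟨w, hw, rfl⟩ := hU
  set V := fun n => connectedComponentIn (FatouSet f) ((lift f)^[n] w)
  have hmem (n : ℕ) : (lift f)^[n] w ∈ FatouSet f := by
    induction n with
    | zero => exact hw
    | succ n ih => rw [Function.iterate_succ_apply']; exact hm.lift_mem_fatouSet htr hinf ih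
  have hmaps (n : ℕ) : MapsTo (lift f) (V n) (V (n + 1)) := by
    simp only [V, Function.iterate_succ_apply']
    exact hm.mapsTo_lift_connectedComponentIn htr hinf (hmem n)
  refine ⟨V, fun n => ⟨⟨_, hmem n, rfl⟩, ?_⟩, hmaps⟩
  induction n with
  | zero => simp [V]
  | succ n ih =>
    rw [Function.iterate_succ', image_comp]
    exact (image_mono ih).trans (hmaps n).image_subset

end Fatou

theorem IsOpen.notMem_of_mem_frontier_connectedComponentIn {X : Type*} [TopologicalSpace X]
    [LocallyConnectedSpace X] {G : Set X} (hG : IsOpen G) {x w : X}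
    (hw : w ∈ frontier (connectedComponentIn G x)) : w ∉ G := fun hwG => by
  obtain ⟨y, hyw, hyx⟩ := mem_closure_iff_nhds.1 hw.1 _
    (hG.connectedComponentIn.mem_nhds (mem_connectedComponentIn hwG))
  have hwx : w ∈ connectedComponentIn G x := by
    rw [connectedComponentIn_eq hyx, ← connectedComponentIn_eq hyw]
    exact mem_connectedComponentIn hwG
  exact hw.2 (by rwa [hG.connectedComponentIn.interior_eq])

/-- Maximum modulus principle: `‖g‖ ≤ ε` on the frontier of such a component. -/
theorem Differentiable.not_isBounded_connectedComponentIn_lt_norm {E F : Type*}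
    [NormedAddCommGroup E] [NormedSpace ℂ E] [Nontrivial E] [NormedAddCommGroup F] [NormedSpace ℂ F]
    {g : E → F} (hg : Differentiable ℂ g) {ε : ℝ} {z₀ : E} (hz₀ : ε < ‖g z₀‖) :
    ¬ IsBounded (connectedComponentIn {z | ε < ‖g z‖} z₀) := fun hb => by
  have hG : IsOpen {z | ε < ‖g z‖} := isOpen_lt continuous_const hg.continuous.norm
  have hfr (w) (hw : w ∈ frontier (connectedComponentIn {z | ε < ‖g z‖} z₀)) : ‖g w‖ ≤ ε :=
    not_lt.1 (hG.notMem_of_mem_frontier_connectedComponentIn hw)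
  exact hz₀.not_ge <| Complex.norm_le_of_forall_mem_frontier_norm_le hb hg.diffContOnCl hfr
    (subset_closure (mem_connectedComponentIn hz₀))

def BoundedOnUnboundedPreconnected (f : ℂ → Sph) : Prop :=
  ∃ S K : Set ℂ, IsPreconnected S ∧ ¬ IsBounded S ∧ IsBounded K ∧ MapsTo f S ((↑) '' K)

section BoundedOnUnboundedPreconnected

variable {f : ℂ → Sph}

theorem HasFiniteAsymptoticValue.boundedOnUnboundedPreconnected
    (h : HasFiniteAsymptoticValue f) : BoundedOnUnboundedPreconnected f := by
  obtain ⟨w, γ, hγc, hγ, hfγ⟩ := h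
  obtain ⟨T, hT⟩ := eventually_atTop.1 <| hfγ <| (isOpenMap_coe _ Metric.isOpen_ball).mem_nhds
    (mem_image_of_mem _ (Metric.mem_ball_self one_pos))
  refine ⟨γ '' Ici (max T 0), Metric.ball w 1,
    isPreconnected_Ici.image _ (hγc.mono (Ici_subset_Ici.2 (le_max_right _ _))),
    fun hb => ?_, Metric.isBounded_ball, ?_⟩
  · have hout : ∀ᶠ t in atTop, γ t ∉ γ '' Ici (max T 0) := hγ (isBounded_def.1 hb)
    obtain ⟨t, htγ, ht⟩ := (hout.and (eventually_ge_atTop (max T 0))).exists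
    exact htγ (mem_image_of_mem _ ht)
  · rintro _ ⟨t, ht, rfl⟩
    exact hT t (le_of_max_le_left ht)

theorem MeroC.boundedOnUnboundedPreconnected_of_omittedC (hm : MeroC f) {a : ℂ}
    (ha : OmittedC f a) : BoundedOnUnboundedPreconnected f := by
  set g := sphInvSub a ∘ f
  obtain ⟨z₀, hz₀⟩ := hm.exists_ne_infty
  obtain ⟨c₀, hc₀⟩ := ne_infty_iff_exists.1 hz₀
  have hg₀ : 0 < ‖g z₀‖ := by
    have : c₀ - a ≠ 0 := sub_ne_zero.2 fun h => ha z₀ (by rw [← hc₀, h])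
    simpa [g, ← hc₀] using this
  set ε := ‖g z₀‖ / 2
  have hε : 0 < ε := half_pos hg₀
  refine ⟨connectedComponentIn {z | ε < ‖g z‖} z₀, Metric.ball a ε⁻¹,
    isPreconnected_connectedComponentIn, (hm.differentiable_sphInvSub_comp ha)
      |>.not_isBounded_connectedComponentIn_lt_norm (half_lt_self hg₀),
    Metric.isBounded_ball, fun z hz => ?_⟩
  have hgz : ε < ‖g z‖ := (connectedComponentIn_subset _ _ hz : z ∈ {z | ε < ‖g z‖})
  induction hfz : f z using OnePoint.rec with
  | infty =>
    simp only [g, Function.comp_apply, hfz, sphInvSub_infty, norm_zero] at hgz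
    linarith
  | coe c =>
    simp only [g, Function.comp_apply, hfz, sphInvSub_coe, norm_inv] at hgz
    have hca : 0 < ‖c - a‖ := inv_pos.1 (hε.trans hgz)
    exact mem_image_of_mem _ (mem_ball_iff_norm.2 ((lt_inv_comm₀ hε hca).1 hgz))

theorem BoundedOnUnboundedPreconnected.not_tendsto_infty (h : BoundedOnUnboundedPreconnected f) :
    ¬ Tendsto f (cobounded ℂ) (𝓝 ∞) := fun hf => by
  obtain ⟨S, K, -, hS, hK, hfS⟩ := h
  have hev : ∀ᶠ z in cobounded ℂ, f z ∉ ((↑) '' closure K : Set Sph) :=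
    hf <| (isOpen_compl_image_coe.2 ⟨isClosed_closure, hK.isCompact_closure⟩).mem_nhds
      infty_notMem_image_coe
  obtain ⟨z, hzS, hz⟩ := ((frequently_cobounded_mem hS).and_eventually hev).exists
  exact hz (image_mono subset_closure (hfS hzS))

theorem BoundedOnUnboundedPreconnected.not_bakerWandering (h : BoundedOnUnboundedPreconnected f)
    (hm : MeroC f) (htr : ¬ IsRationalC f) (U : Set Sph) : ¬ BakerWandering f U := by
  rintro ⟨⟨hU, -⟩, ⟨N, hsurr⟩, hesc⟩
  obtain ⟨V, hV, hVmaps⟩ := hm.exists_iterComp htr (infty_notMem_fatouSet h.not_tendsto_infty) hU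
  obtain ⟨S, K, hSc, hSb, hK, hfS⟩ := h
  obtain ⟨s₀, hs₀⟩ := nonempty_of_not_isBounded hSb
  obtain ⟨M, hM⟩ := hK.subset_closedBall 0
  obtain ⟨N₁, hN₁⟩ := hesc (‖s₀‖ + 1)
  obtain ⟨N₂, hN₂⟩ := hesc (M + 1)
  set n := max N (max N₁ N₂)
  obtain ⟨hinf, -, -, -, h0⟩ := hsurr n (by omega) (V n) (hV n)
  have hSV (z : ℂ) (hz : z ∈ S) : (z : Sph) ∉ V n := fun hzV => by
    obtain ⟨c, hcK, hc⟩ := hfS hz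
    have hcM := mem_closedBall_zero_iff.1 (hM hcK)
    have := hN₂ (n + 1) (by omega) _ (hV (n + 1)) c (hc ▸ hVmaps n hzV)
    linarith
  have hBV (z : ℂ) (hz : z ∈ Metric.ball 0 (‖s₀‖ + 1)) : (z : Sph) ∉ V n := fun hzV => by
    have := hN₁ n (by omega) _ (hV n) z hzV
    rw [mem_ball_zero_iff] at hz
    linarith
  set E : Set Sph := ((↑) '' Metric.ball (0 : ℂ) (‖s₀‖ + 1)) ∪ insert ∞ ((↑) '' S)
  have hE : IsPreconnected E :=
    IsPreconnected.union (s₀ : Sph) ⟨s₀, by simp, rfl⟩ (Or.inr ⟨s₀, hs₀, rfl⟩)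
      ((convex_ball _ _).isPreconnected.image _ continuous_coe.continuousOn)
      (hSc.insert_infty_coe_image hSb)
  have hEV : E ⊆ (V n)ᶜ := by
    rintro _ (⟨z, hz, rfl⟩ | rfl | ⟨z, hz, rfl⟩)
    exacts [hBV z hz, hinf, hSV z hz]
  have h0E : ((0 : ℂ) : Sph) ∈ E := Or.inl ⟨0, Metric.mem_ball_self (by positivity), rfl⟩
  exact h0 (hE.subset_connectedComponentIn h0E hEV (Or.inr (mem_insert _ _)))

end BoundedOnUnboundedPreconnected

/-- A transcendental meromorphic function with a finite asymptotic value
(in particular, with an omitted value) has no Baker wandering domain. -/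
theorem finite_asymptotic_value_no_Baker_wandering
    (f : ℂ → Sph) (hf : TranscMero f)
    (h : HasFiniteAsymptoticValue f ∨ ∃ a : ℂ, OmittedC f a) :
    ¬ ∃ U : Set Sph, BakerWandering f U := by
  obtain ⟨hm, htr⟩ := hf
  have hB : BoundedOnUnboundedPreconnected f := by
    rcases h with h | ⟨a, ha⟩
    exacts [h.boundedOnUnboundedPreconnected, hm.boundedOnUnboundedPreconnected_of_omittedC ha]
  rintro ⟨U, hU⟩
  exact hB.not_bakerWandering hm htr U hU

end
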